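/- arXiv:1012.5954 — 5 statements merged into one kernel-verified Lean document; each statement's English description precedes it below -/
import Mathlib

section
/- Let B be an integral domain, G a finite group acting on B by ring automorphisms, and A = B^G the invariant subring. If B is projective as a module over B ⊗_A B (i.e., B is a separable A-algebra), then every A-linear endomorphism f of B has the form f(t) = Σ_{g∈G} b_g · g(t) for some elements b_g ∈ B; equivalently, the map φ : B*G → End_A(B), φ(b ⊗ g)(t) = b·g(t), is surjective. -/
/-!
Projectivity of `B` over `B ⊗[A] B` yields a separability idempotent `e = ∑ xᵢ ⊗ yᵢ`:
`∑ xᵢ yᵢ = 1` and `(b ⊗ 1) e = (1 ⊗ b) e`. Applying the algebra map `x ⊗ y ↦ x σ(y)` to the second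
identity gives `(b - σ b) ∑ xᵢ σ(yᵢ) = 0`, so in a domain `∑ xᵢ σ(yᵢ)` is `1` for `σ = id` and `0`
otherwise. Summing over the automorphisms induced by `G` (its image, as `G` need not act
faithfully) gives `t = ∑ xᵢ tr(yᵢ t)` with `tr = ∑ σ` valued in `A`, and `A`-linearity of `f`
yields `f t = ∑_σ (∑ᵢ f(xᵢ) σ(yᵢ)) σ(t)`.
-/

open scoped TensorProduct

noncomputable section

/-- The fixed subring `B^G` of a group action on a commutative ring. -/
def fixedSubring (G B : Type) [Group G] [CommRing B] [MulSemiringAction G B] : Subring B where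
  carrier := {b | ∀ g : G, g • b = b}
  mul_mem' ha hb := fun g => by rw [smul_mul', ha g, hb g]
  add_mem' ha hb := fun g => by rw [smul_add, ha g, hb g]
  one_mem' := fun g => smul_one g
  zero_mem' := fun g => smul_zero g
  neg_mem' ha := fun g => by rw [smul_neg, ha g]

open Algebra.TensorProduct Finset

section Separable

variable {R S : Type*} [CommRing R] [CommRing S] [Algebra R S]

structure IsSeparabilityIdempotent (e : S ⊗[R] S) : Prop where
  lmul'_eq_one : lmul' R e = 1
  tmul_one_mul : ∀ b : S, (b ⊗ₜ[R] 1) * e = (1 ⊗ₜ[R] b) * e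

/-- The idempotent is the image of `1` under an `S ⊗[R] S`-linear section of the multiplication
map. -/
theorem exists_isSeparabilityIdempotent
    (h : letI : Module (S ⊗[R] S) S := Module.compHom S (lmul' R (S := S)).toRingHom
      Module.Projective (S ⊗[R] S) S) :
    ∃ e : S ⊗[R] S, IsSeparabilityIdempotent e := by
  let _ : Module (S ⊗[R] S) S := Module.compHom S (lmul' R (S := S)).toRingHom
  have hmul : ∀ (r : S ⊗[R] S) (x : S), r • x = lmul' R r * x := fun _ _ => rfl
  let μ := LinearMap.toSpanSingleton (S ⊗[R] S) S 1
  have hμ : ∀ r, μ r = lmul' R r := fun r => (hmul r 1).trans (mul_one _)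
  have hsurj : Function.Surjective μ := fun b => ⟨b ⊗ₜ 1, by rw [hμ, lmul'_apply_tmul, mul_one]⟩
  obtain ⟨s, hs⟩ := Module.projective_lifting_property μ LinearMap.id hsurj
  have hμs : ∀ b, lmul' R (s b) = b := fun b => by rw [← hμ]; exact LinearMap.ext_iff.mp hs b
  have hs_mul : ∀ r, r * s 1 = s (lmul' R r) := fun r => by
    rw [← smul_eq_mul, ← map_smul, hmul, mul_one]
  refine ⟨s 1, hμs 1, fun b => ?_⟩
  rw [hs_mul, hs_mul, lmul'_apply_tmul, lmul'_apply_tmul, mul_one, one_mul]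

def twistedMul (σ : S →ₐ[R] S) : S ⊗[R] S →ₐ[R] S :=
  lift (AlgHom.id R S) σ fun _ _ => .all _ _

@[simp]
theorem twistedMul_tmul (σ : S →ₐ[R] S) (x y : S) : twistedMul σ (x ⊗ₜ y) = x * σ y := rfl

theorem twistedMul_one : twistedMul (1 : S →ₐ[R] S) = lmul' R := by
  ext <;> rfl

namespace IsSeparabilityIdempotent

variable {e : S ⊗[R] S}

theorem twistedMul_eq_zero (he : IsSeparabilityIdempotent e) [IsDomain S] {σ : S →ₐ[R] S}
    (hσ : σ ≠ 1) : twistedMul σ e = 0 := by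
  obtain ⟨b, hb⟩ : ∃ b, σ b ≠ b := by
    by_contra! h
    exact hσ (AlgHom.ext h)
  have h := congrArg (twistedMul σ) (he.tmul_one_mul b)
  rw [map_mul, map_mul, twistedMul_tmul, twistedMul_tmul, map_one, mul_one, one_mul,
    ← sub_eq_zero, ← sub_mul] at h
  exact (mul_eq_zero.mp h).resolve_left (sub_ne_zero.mpr hb.symm)

theorem sum_twistedMul_mul (he : IsSeparabilityIdempotent e) [IsDomain S]
    (s : Finset (S →ₐ[R] S)) (hs : 1 ∈ s) (t : S) :
    ∑ σ ∈ s, twistedMul σ e * σ t = t := by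
  rw [sum_eq_single_of_mem 1 hs fun σ _ hσ => by rw [he.twistedMul_eq_zero hσ, zero_mul],
    twistedMul_one, he.lmul'_eq_one, one_mul, AlgHom.one_apply]

end IsSeparabilityIdempotent

theorem map_sum_twistedMul_mul (s : Finset (S →ₐ[R] S))
    (hs : ∀ x, ∑ σ ∈ s, σ x ∈ Set.range (algebraMap R S)) (f : S →ₗ[R] S) (z : S ⊗[R] S)
    (t : S) :
    f (∑ σ ∈ s, twistedMul σ z * σ t) = ∑ σ ∈ s, twistedMul σ (f.rTensor S z) * σ t := by
  induction z using TensorProduct.induction_on with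
  | zero => simp
  | tmul x y =>
    -- both sides are `tr (y * t)` times `x` resp. `f x`, and `tr (y * t) ∈ R`
    obtain ⟨r, hr⟩ := hs (y * t)
    have hsum : ∀ a : S, ∑ σ ∈ s, twistedMul σ (a ⊗ₜ y) * σ t = algebraMap R S r * a := by
      intro a
      simp only [twistedMul_tmul, hr, map_mul, sum_mul]
      exact sum_congr rfl fun σ _ => by ring
    rw [LinearMap.rTensor_tmul, hsum, hsum, ← Algebra.smul_def, map_smul, Algebra.smul_def]
  | add z w hz hw => simp only [map_add, add_mul, sum_add_distrib, hz, hw]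

end Separable

theorem Finset.sum_image_univ_mul_left {G M N : Type*} [Group G] [Fintype G] [Monoid M]
    [DecidableEq M] [AddCommMonoid N] (φ : G →* M) (F : M → N) (h : G) :
    ∑ σ ∈ univ.image φ, F (φ h * σ) = ∑ σ ∈ univ.image φ, F σ := by
  classical
  have himg : (univ.image φ).image (φ h * ·) = univ.image φ := by
    rw [image_image, show (φ h * ·) ∘ φ = φ ∘ (h * ·) from funext fun g => (map_mul φ h g).symm,
      ← image_image, image_univ_of_surjective (mul_left_surjective h)]
  conv_rhs => rw [← himg]
  exact (sum_image fun _ _ _ _ hxy => ((Group.isUnit h).map φ).mul_left_cancel hxy).symm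

theorem Finset.exists_sum_image_univ_mul_eq {G M S : Type*} [Fintype G] [DecidableEq M]
    [NonUnitalNonAssocSemiring S] (φ : G → M) (c : M → S) :
    ∃ b : G → S, ∀ v : M → S, ∑ σ ∈ univ.image φ, c σ * v σ = ∑ g, b g * v (φ g) := by
  classical
  obtain ⟨u, -, hinj, himg⟩ := exists_subset_injOn_image_eq_of_surjOn Set.univ (univ.image φ)
    fun σ hσ => by simpa using hσ
  refine ⟨fun g => if g ∈ u then c (φ g) else 0, fun v => ?_⟩
  simp only [ite_mul, zero_mul]
  rw [sum_ite_mem, univ_inter, ← himg, sum_image hinj]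

section FixedSubring

variable (G B : Type) [Group G] [CommRing B] [MulSemiringAction G B]

instance : SMulCommClass G (fixedSubring G B) B where
  smul_comm g a x := by
    rw [Subring.smul_def, Subring.smul_def, smul_eq_mul, smul_eq_mul, smul_mul', a.2 g]

def fixedSubringActionHom : G →* (B →ₐ[fixedSubring G B] B) :=
  (AlgEquiv.toAlgHomHom _ B).comp (MulSemiringAction.toAlgAut G (fixedSubring G B) B)

theorem sum_image_fixedSubringActionHom_mem_range [Fintype G]
    [DecidableEq (B →ₐ[fixedSubring G B] B)] (x : B) :
    ∑ σ ∈ univ.image (fixedSubringActionHom G B), σ x ∈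
      Set.range (algebraMap (fixedSubring G B) B) := by
  refine ⟨⟨_, fun h => ?_⟩, rfl⟩
  change h • ∑ σ ∈ univ.image (fixedSubringActionHom G B), σ x = _
  rw [smul_sum]
  exact sum_image_univ_mul_left (fixedSubringActionHom G B) (fun σ => σ x) h

end FixedSubring

/-- Proposition 3.8: let `B` be an integral domain, `G` a finite group
acting on `B` by ring automorphisms and `A = B^G`.  If `B` is a separable `A`-algebra
(i.e. `B` is projective as a module over `B ⊗_A B`, acting via multiplication), then every
`A`-linear endomorphism `f` of `B` has the form `f(t) = ∑_{g ∈ G} b_g · g(t)`; that is,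
the natural map `φ : B*G → End_A(B)` is surjective. -/
theorem stmt_3 (B G : Type) [CommRing B] [IsDomain B] [Group G] [Fintype G]
    [MulSemiringAction G B]
    (hsep :
      letI : Module (B ⊗[↥(fixedSubring G B)] B) B :=
        Module.compHom B (Algebra.TensorProduct.lmul' ↥(fixedSubring G B) (S := B)).toRingHom
      Module.Projective (B ⊗[↥(fixedSubring G B)] B) B)
    (f : B →ₗ[↥(fixedSubring G B)] B) :
    ∃ b : G → B, ∀ t : B, f t = ∑ g : G, b g * g • t := by
  classical
  obtain ⟨e, he⟩ := exists_isSeparabilityIdempotent hsep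
  let s := univ.image (fixedSubringActionHom G B)
  have hs : 1 ∈ s := mem_image.mpr ⟨1, mem_univ _, map_one _⟩
  obtain ⟨b, hb⟩ := exists_sum_image_univ_mul_eq (fixedSubringActionHom G B)
    fun σ => twistedMul σ (f.rTensor B e)
  refine ⟨b, fun t => ?_⟩
  calc f t = f (∑ σ ∈ s, twistedMul σ e * σ t) := by rw [he.sum_twistedMul_mul s hs]
    _ = ∑ σ ∈ s, twistedMul σ (f.rTensor B e) * σ t :=
      map_sum_twistedMul_mul s (sum_image_fixedSubringActionHom_mem_range G B) f e t
    _ = ∑ g, b g * g • t := hb fun σ => σ t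
end
end

section
/- Let (A, m, κ) ⊆ (B, n, ℓ) be an extension of commutative Noetherian local rings such that B is finitely generated as an A-algebra and m = n ∩ A. If the extension is unramified, i.e., n = mB and the residue field extension κ ⊆ ℓ is separable, then B is projective as a module over B ⊗_A B (i.e., B is a separable A-algebra). -/
open scoped TensorProduct

open IsLocalRing in
theorem aux_unramified (A B : Type) [CommRing A] [CommRing B]
    [IsNoetherianRing A] [IsNoetherianRing B]
    [IsLocalRing A] [IsLocalRing B] [Algebra A B]
    [Algebra.FiniteType A B]
    [IsLocalHom (algebraMap A B)]
    (hnmB : IsLocalRing.maximalIdeal B =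
      Ideal.map (algebraMap A B) (IsLocalRing.maximalIdeal A))
    [Algebra.IsSeparable (IsLocalRing.ResidueField A) (IsLocalRing.ResidueField B)] :
    Algebra.FormallyUnramified A B := by
  haveI : Algebra.FormallyUnramified A (ResidueField A) := by
    apply Algebra.FormallyUnramified.of_surjective (Algebra.ofId A (ResidueField A))
    show Function.Surjective (algebraMap A (ResidueField A))
    rw [ResidueField.algebraMap_eq]
    exact Ideal.Quotient.mk_surjective
  haveI : Algebra.FormallyUnramified (ResidueField A) (ResidueField B) :=
    Algebra.FormallyUnramified.of_isSeparable _ _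
  haveI : Algebra.FormallyUnramified A (ResidueField B) :=
    Algebra.FormallyUnramified.comp A (ResidueField A) (ResidueField B)
  have hsurj : Function.Surjective (algebraMap B (ResidueField B)) := by
    rw [ResidueField.algebraMap_eq]
    exact Ideal.Quotient.mk_surjective
  haveI : IsScalarTower A B (ResidueField B) :=
    IsScalarTower.of_algebraMap_eq (fun a => rfl)
  have hker : RingHom.ker (algebraMap B (ResidueField B)) = maximalIdeal B := by
    rw [ResidueField.algebraMap_eq, ker_residue]
  -- every element of n has vanishing differential in ℓ ⊗[B] Ω[B/A]
  have key : ∀ z ∈ maximalIdeal B,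
      (1 : ResidueField B) ⊗ₜ[B] (KaehlerDifferential.D A B z) = 0 := by
    intro z hz
    rw [hnmB] at hz
    have : z ∈ maximalIdeal B ∧
        (1 : ResidueField B) ⊗ₜ[B] (KaehlerDifferential.D A B z) = 0 := by
      refine Submodule.span_induction ?_ ?_ ?_ ?_ hz
      · rintro _ ⟨a, ha, rfl⟩
        constructor
        · rw [hnmB]; exact Ideal.mem_map_of_mem _ ha
        · rw [Derivation.map_algebraMap, TensorProduct.tmul_zero]
      · simp
      · rintro x y - - ⟨hx1, hx2⟩ ⟨hy1, hy2⟩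
        exact ⟨add_mem hx1 hy1, by rw [map_add, TensorProduct.tmul_add, hx2, hy2, add_zero]⟩
      · rintro b z - ⟨hz1, hz2⟩
        refine ⟨Ideal.mul_mem_left _ b hz1, ?_⟩
        have hres : residue B z = 0 := by
          rw [← RingHom.mem_ker, ker_residue]; exact hz1
        have : (KaehlerDifferential.D A B) (b • z)
            = b • KaehlerDifferential.D A B z + z • KaehlerDifferential.D A B b := by
          simp [Derivation.leibniz]
        rw [this, TensorProduct.tmul_add, TensorProduct.tmul_smul, hz2, smul_zero,
          TensorProduct.tmul_smul]
        have : z • ((1 : ResidueField B) ⊗ₜ[B] KaehlerDifferential.D A B b)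
            = (z • (1 : ResidueField B)) ⊗ₜ[B] KaehlerDifferential.D A B b := by
          rw [TensorProduct.smul_tmul']
        rw [this]
        have : z • (1 : ResidueField B) = 0 := by
          rw [Algebra.smul_def, ResidueField.algebraMap_eq, hres, zero_mul]
        rw [this, TensorProduct.zero_tmul, zero_add]
    exact this.2
  haveI : Subsingleton ((ResidueField B) ⊗[B] (Ω[B⁄A])) := by
    rw [subsingleton_iff_forall_eq 0]
    intro y
    have hmem : y ∈ (LinearMap.ker
        (KaehlerDifferential.mapBaseChange A B (ResidueField B))).restrictScalars B := by
      simp only [Submodule.restrictScalars_mem, LinearMap.mem_ker]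
      exact Subsingleton.elim _ _
    rw [← KaehlerDifferential.range_kerCotangentToTensor A B (ResidueField B) hsurj] at hmem
    obtain ⟨x, rfl⟩ := hmem
    obtain ⟨w, rfl⟩ := Ideal.toCotangent_surjective _ x
    rw [KaehlerDifferential.kerCotangentToTensor_toCotangent]
    exact key w.1 (hker ▸ w.2)
  haveI fin : Module.Finite B (Ω[B⁄A]) := KaehlerDifferential.finite A B
  exact ⟨(IsLocalRing.subsingleton_tensorProduct (R := B)).mp this⟩

/-- Proposition 3.10: let `(A,m,κ) ⊆ (B,n,ℓ)` be an extension of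
commutative Noetherian local rings with `B` finitely generated as an `A`-algebra and
`m = n ∩ A`.  If the extension is unramified (`n = mB` and `κ ⊆ ℓ` separable), then `B`
is projective as a `B ⊗_A B`-module (via multiplication), i.e. `B` is a separable
`A`-algebra. -/
theorem stmt_4 (A B : Type) [CommRing A] [CommRing B]
    [IsNoetherianRing A] [IsNoetherianRing B]
    [IsLocalRing A] [IsLocalRing B] [Algebra A B]
    (hinj : Function.Injective (algebraMap A B))
    [Algebra.FiniteType A B]
    (hloc : (IsLocalRing.maximalIdeal B).comap (algebraMap A B) = IsLocalRing.maximalIdeal A)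
    (hnmB : IsLocalRing.maximalIdeal B =
      Ideal.map (algebraMap A B) (IsLocalRing.maximalIdeal A))
    (hsep :
      letI : IsLocalHom (algebraMap A B) := by
        constructor
        intro a ha
        by_contra h
        have h1 : a ∈ IsLocalRing.maximalIdeal A :=
          (IsLocalRing.mem_maximalIdeal a).mpr (mem_nonunits_iff.mpr h)
        rw [← hloc] at h1
        exact mem_nonunits_iff.mp ((IsLocalRing.mem_maximalIdeal _).mp (Ideal.mem_comap.mp h1)) ha
      Algebra.IsSeparable (IsLocalRing.ResidueField A) (IsLocalRing.ResidueField B)) :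
    letI : Module (B ⊗[A] B) B :=
      Module.compHom B (Algebra.TensorProduct.lmul' A (S := B)).toRingHom
    Module.Projective (B ⊗[A] B) B := by
  haveI : IsLocalHom (algebraMap A B) := by
    constructor
    intro a ha
    by_contra h
    have h1 : a ∈ IsLocalRing.maximalIdeal A :=
      (IsLocalRing.mem_maximalIdeal a).mpr (mem_nonunits_iff.mpr h)
    rw [← hloc] at h1
    exact mem_nonunits_iff.mp ((IsLocalRing.mem_maximalIdeal _).mp (Ideal.mem_comap.mp h1)) ha
  haveI : Algebra.IsSeparable (IsLocalRing.ResidueField A) (IsLocalRing.ResidueField B) := hsep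
  haveI : Algebra.FormallyUnramified A B := aux_unramified A B hnmB
  haveI : Algebra.EssFiniteType A B := inferInstance
  letI : Module (B ⊗[A] B) B :=
    Module.compHom B (Algebra.TensorProduct.lmul' A (S := B)).toRingHom
  set t := Algebra.FormallyUnramified.elem A B with ht
  have key : ∀ (r : B ⊗[A] B) (b : B),
      ((Algebra.TensorProduct.lmul' A r * b) ⊗ₜ[A] (1 : B)) * t = r * ((b ⊗ₜ[A] 1) * t) := by
    intro r b
    induction r using TensorProduct.induction_on with
    | zero => simp
    | tmul x y =>
        have h1 : (x ⊗ₜ[A] y) * ((b ⊗ₜ[A] (1:B)) * t) = ((x*b) ⊗ₜ[A] y) * t := by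
          rw [← mul_assoc, Algebra.TensorProduct.tmul_mul_tmul, mul_one]
        have h2 : (x*b) ⊗ₜ[A] y = ((x*b) ⊗ₜ[A] (1:B)) * ((1:B) ⊗ₜ[A] y) := by
          rw [Algebra.TensorProduct.tmul_mul_tmul, mul_one, one_mul]
        rw [h1, h2, mul_assoc, Algebra.FormallyUnramified.one_tmul_mul_elem,
          ← mul_assoc, Algebra.TensorProduct.tmul_mul_tmul, mul_one,
          Algebra.TensorProduct.lmul'_apply_tmul]
        congr 2
        ring
    | add u v hu hv =>
        rw [map_add, add_mul, add_mul, TensorProduct.add_tmul, add_mul, hu, hv]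
  have hsmul : ∀ (r : B ⊗[A] B) (b : B),
      r • b = Algebra.TensorProduct.lmul' A (S := B) r * b := fun _ _ => rfl
  have hsmul' : ∀ (r x : B ⊗[A] B), r • x = r * x := fun _ _ => rfl
  refine Module.Projective.of_split (R := B ⊗[A] B) (M := B ⊗[A] B)
    ⟨⟨fun b => (b ⊗ₜ[A] 1) * t, ?_⟩, ?_⟩
    ⟨⟨fun x => Algebra.TensorProduct.lmul' A x, ?_⟩, ?_⟩ ?_
  · intro x y
    simp only [TensorProduct.add_tmul, add_mul]
  · intro r b
    simp only [RingHom.id_apply]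
    rw [hsmul, hsmul', key]
  · intro x y; exact map_add _ x y
  · intro r x
    simp only [RingHom.id_apply]
    rw [hsmul', hsmul, map_mul]
  · ext b
    simp only [LinearMap.coe_comp, LinearMap.coe_mk, AddHom.coe_mk, Function.comp_apply,
      LinearMap.id_coe, id_eq]
    rw [map_mul, Algebra.FormallyUnramified.lmul_elem,
      Algebra.TensorProduct.lmul'_apply_tmul, mul_one, mul_one]
end

section
/- Let f : A → B be a surjective homomorphism of finite-dimensional algebras over a field. Then for every idempotent e of B there exists an idempotent e' of A such that f(e') = e. -/
/-- In a commutative artinian ring, for any `a` there is `n ≥ 1` and `c`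
with `a ^ n = a ^ (2 * n) * c`. -/
lemma aux_stab {R : Type} [CommRing R] [IsArtinianRing R] (a : R) :
    ∃ n : ℕ, 1 ≤ n ∧ ∃ c : R, a ^ n = a ^ (2 * n) * c := by
  have hmono : Antitone (fun n : ℕ => Ideal.span {a ^ n}) := by
    intro m n hmn
    rw [Ideal.span_singleton_le_span_singleton]
    exact pow_dvd_pow a hmn
  obtain ⟨n₀, hn₀⟩ := IsArtinian.monotone_stabilizes
    (⟨fun n => OrderDual.toDual (Ideal.span {a ^ n}), fun m n h => hmono h⟩ :
      ℕ →o (Ideal R)ᵒᵈ)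
  refine ⟨n₀ + 1, le_add_self, ?_⟩
  have h1 := hn₀ (n₀ + 1) (by omega)
  have h2 := hn₀ (2 * (n₀ + 1)) (by omega)
  have : Ideal.span {a ^ (n₀ + 1)} = Ideal.span {a ^ (2 * (n₀ + 1))} := by
    have := h1.symm.trans h2
    exact congrArg OrderDual.ofDual this
  have hmem : a ^ (n₀ + 1) ∈ Ideal.span ({a ^ (2 * (n₀ + 1))} : Set R) := by
    rw [← this]; exact Ideal.mem_span_singleton_self _
  rw [Ideal.mem_span_singleton] at hmem
  obtain ⟨c, hc⟩ := hmem
  exact ⟨c, hc⟩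

/-- Proposition 6.1: let `f : A → B` be a surjective homomorphism of
finite-dimensional algebras over a field `k`.  Then every idempotent `e` of `B` lifts to
an idempotent `e'` of `A` with `f e' = e`. -/
theorem stmt_8 (k A B : Type) [Field k] [Ring A] [Ring B] [Algebra k A] [Algebra k B]
    [FiniteDimensional k A] [FiniteDimensional k B]
    (f : A →ₐ[k] B) (hf : Function.Surjective f)
    (e : B) (he : IsIdempotentElem e) :
    ∃ e' : A, IsIdempotentElem e' ∧ f e' = e := by
  obtain ⟨a, rfl⟩ := hf e
  -- work in the commutative subalgebra generated by `a`
  let C := Algebra.adjoin k ({a} : Set A)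
  letI : CommRing C := Algebra.adjoinCommRingOfComm k (by
    rintro x rfl y rfl; · rfl)
  haveI : FiniteDimensional k C := FiniteDimensional.finiteDimensional_submodule C.toSubmodule
  haveI : IsArtinianRing C := isArtinian_of_tower k inferInstance
  set a' : C := ⟨a, Algebra.self_mem_adjoin_singleton k a⟩ with ha'
  obtain ⟨n, hn1, c, hc⟩ := aux_stab a'
  refine ⟨(a' ^ n * c : C), ?_, ?_⟩
  · show ((a' ^ n * c : C) : A) * ((a' ^ n * c : C) : A) = ((a' ^ n * c : C) : A)
    rw [← Subalgebra.coe_mul]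
    congr 1
    have : (a' ^ n * c) * (a' ^ n * c) = (a' ^ (2 * n) * c) * c := by ring
    rw [this, ← hc]
  · have hpow : (f a) ^ n = f a := by
      conv_lhs => rw [← Nat.sub_add_cancel hn1]
      exact he.pow_succ_eq _
    have hpow2 : (f a) ^ (2 * n) = f a := by
      conv_lhs => rw [← Nat.sub_add_cancel (show 1 ≤ 2 * n by omega)]
      exact he.pow_succ_eq _
    have key : f ((a' ^ n : C) : A) = f a := by push_cast; rw [map_pow, hpow]
    have key2 : f ((a' ^ (2 * n) : C) : A) = f a := by push_cast; rw [map_pow, hpow2]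
    have h := congrArg (fun x : C => f (x : A)) hc
    simp only [Subalgebra.coe_mul, map_mul] at h ⊢
    rw [key2, key] at h
    rw [key]
    exact h.symm
end

section
/- Let R be a commutative Noetherian ring and M, N finitely generated R-modules. Choose a presentation F_1 →^f F_0 → M → 0 of M by finitely generated free R-modules and let Tr M = coker(f* : Hom_R(F_0,R) → Hom_R(F_1,R)) be the Auslander–Bridger transpose. Let λ_{M,N} : Hom_R(M,R) ⊗_R N → Hom_R(M,N) be the natural map sending φ ⊗ y to (x ↦ φ(x)·y). Then the cokernel of λ_{M,N} (which equals Hom_R(M,N) modulo the submodule of homomorphisms factoring through a projective R-module) is isomorphic to Tor_1^R(Tr M, N). -/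
/-!
Dualizing the presentation gives an exact sequence `0 → M* → F₀* → F₁* → Tr M → 0`. As the `Fᵢ`
are finite free, `Fᵢ* ⊗ N = Hom(Fᵢ, N)`, so left exactness of `Hom(-, N)` identifies `Hom(M, N)`
with the kernel of `F₀* ⊗ N → F₁* ⊗ N`, and `λ` with `M* ⊗ N → F₀* ⊗ N`: the cokernel of `λ` is
the homology of `M* ⊗ N → F₀* ⊗ N → F₁* ⊗ N`. On the other side, `Tor₁(Tr M, N)` is the homology
of `Tr M ⊗ Q₂ → Tr M ⊗ Q₁ → Tr M ⊗ Q₀` for a projective resolution `Q` of `N`. The two agree by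
the balancing chase in the double complex `(M* → F₀* → F₁*) ⊗ (Q₂ → Q₁ → Q₀)`, which only needs
`F₁*` and `Q₀` to be flat: both homologies are quotients of the module of zig-zags
`(b, a) ∈ (F₁* ⊗ Q₁) × (F₀* ⊗ Q₀)` with `d b = f* a`, by one and the same submodule.
-/

open CategoryTheory LinearMap TensorProduct

noncomputable section

abbrev LinearMap.homology {R M₁ M₂ M₃ : Type*} [Ring R] [AddCommGroup M₁] [AddCommGroup M₂]
    [AddCommGroup M₃] [Module R M₁] [Module R M₂] [Module R M₃]
    (f : M₁ →ₗ[R] M₂) (g : M₂ →ₗ[R] M₃) : Type _ :=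
  ker g ⧸ (range f).submoduleOf (ker g)

def Submodule.quotEquivOfCommonCover {R Z X Y : Type*} [Ring R]
    [AddCommGroup Z] [AddCommGroup X] [AddCommGroup Y] [Module R Z] [Module R X] [Module R Y]
    {φ : Z →ₗ[R] X} {ψ : Z →ₗ[R] Y} (hφ : Function.Surjective φ) (hψ : Function.Surjective ψ)
    {X' : Submodule R X} {Y' : Submodule R Y} (h : X'.comap φ = Y'.comap ψ) :
    (X ⧸ X') ≃ₗ[R] (Y ⧸ Y') :=
  have hker : ker (X'.mkQ ∘ₗ φ) = ker (Y'.mkQ ∘ₗ ψ) := by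
    rw [ker_comp, ker_comp, Submodule.ker_mkQ, Submodule.ker_mkQ, h]
  ((X'.mkQ ∘ₗ φ).quotKerEquivOfSurjective ((Submodule.mkQ_surjective _).comp hφ)).symm ≪≫ₗ
    Submodule.quotEquivOfEq _ _ hker ≪≫ₗ
    (Y'.mkQ ∘ₗ ψ).quotKerEquivOfSurjective ((Submodule.mkQ_surjective _).comp hψ)

def quotRangeEquivOfExact {R D H A B : Type*} [Ring R] [AddCommGroup D] [AddCommGroup H]
    [AddCommGroup A] [AddCommGroup B] [Module R D] [Module R H] [Module R A] [Module R B]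
    {l : D →ₗ[R] H} {ε : H →ₗ[R] A} {u : A →ₗ[R] B} {v : D →ₗ[R] A}
    (hε : Function.Injective ε) (hεu : Function.Exact ε u) (hcomm : ε ∘ₗ l = v) :
    (H ⧸ range l) ≃ₗ[R] homology v u :=
  Submodule.quotEquivOfCommonCover (φ := LinearMap.id) Function.surjective_id
    (ψ := ε.codRestrict (ker u) fun h => hεu.apply_apply_eq_zero h)
    (fun ⟨a, ha⟩ => (hεu a).mp ha |>.imp fun h hh => Subtype.ext hh) <| by
    ext h
    simp only [Submodule.comap_id, Submodule.submoduleOf, Submodule.mem_comap,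
      Submodule.coe_subtype, mem_range, ← hcomm, LinearMap.comp_apply]
    exact ⟨fun ⟨w, hw⟩ => ⟨w, hw ▸ rfl⟩, fun ⟨w, hw⟩ => ⟨w, hε hw⟩⟩

section DualTensor

variable {R F₀ F₁ M N : Type*} [CommRing R] [AddCommGroup F₀] [AddCommGroup F₁]
  [AddCommGroup M] [AddCommGroup N] [Module R F₀] [Module R F₁] [Module R M] [Module R N]
  [Module.Finite R F₀] [Module.Projective R F₀]

variable (N) in
def homToDualTensor (g : F₀ →ₗ[R] M) : (M →ₗ[R] N) →ₗ[R] Module.Dual R F₀ ⊗[R] N :=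
  (dualTensorHomEquiv R F₀ N).symm.toLinearMap ∘ₗ lcomp R N g

theorem homToDualTensor_comp_dualTensorHom (g : F₀ →ₗ[R] M) :
    homToDualTensor N g ∘ₗ dualTensorHom R M N = rTensor N g.dualMap := by
  rw [homToDualTensor, comp_assoc, ← dualTensorHom_comp_rTensor_dualMap, ← comp_assoc]
  exact congrArg (· ∘ₗ rTensor N g.dualMap) (dualTensorHomEquiv R F₀ N).symm_comp

theorem injective_homToDualTensor {g : F₀ →ₗ[R] M} (hg : Function.Surjective g) :
    Function.Injective (homToDualTensor N g) :=
  (dualTensorHomEquiv R F₀ N).symm.injective.comp (lcomp_injective_of_surjective g hg)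

theorem exact_homToDualTensor_rTensor_dualMap [Module.Finite R F₁] [Module.Projective R F₁]
    {f : F₁ →ₗ[R] F₀} {g : F₀ →ₗ[R] M} (hfg : Function.Exact f g)
    (hg : Function.Surjective g) :
    Function.Exact (homToDualTensor N g) (rTensor N f.dualMap) := by
  rw [← LinearEquiv.postcomp_exact_iff_exact (e := dualTensorHomEquiv R F₁ N)]
  have : (dualTensorHomEquiv R F₁ N).toLinearMap ∘ₗ rTensor N f.dualMap =
      lcomp R N f ∘ₗ (dualTensorHomEquiv R F₀ N).toLinearMap :=
    dualTensorHom_comp_rTensor_dualMap f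
  rw [this, homToDualTensor]
  exact (LinearEquiv.conj_symm_exact_iff_exact _ _ _).mpr
    (exact_lcomp_of_exact_of_surjective N hfg hg)

def dualTensorHomQuotEquiv [Module.Finite R F₁] [Module.Projective R F₁]
    {f : F₁ →ₗ[R] F₀} {g : F₀ →ₗ[R] M} (hfg : Function.Exact f g)
    (hg : Function.Surjective g) :
    ((M →ₗ[R] N) ⧸ range (dualTensorHom R M N)) ≃ₗ[R]
      -- unification alone does not find the `AddCommGroup` structures of these tensor products
      homology (M₁ := Module.Dual R M ⊗[R] N) (M₂ := Module.Dual R F₀ ⊗[R] N)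
        (M₃ := Module.Dual R F₁ ⊗[R] N) (rTensor N g.dualMap) (rTensor N f.dualMap) :=
  quotRangeEquivOfExact (D := Module.Dual R M ⊗[R] N) (H := M →ₗ[R] N)
    (injective_homToDualTensor hg) (exact_homToDualTensor_rTensor_dualMap hfg hg)
    (homToDualTensor_comp_dualTensorHom g)

end DualTensor

theorem LinearMap.rTensor_lTensor_comm {R X Y P Q : Type*} [CommRing R]
    [AddCommGroup X] [AddCommGroup Y] [AddCommGroup P] [AddCommGroup Q]
    [Module R X] [Module R Y] [Module R P] [Module R Q]
    (w : X →ₗ[R] Y) (d : P →ₗ[R] Q) (x : X ⊗[R] P) :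
    rTensor Q w (lTensor X d x) = lTensor Y d (rTensor P w x) := by
  rw [← LinearMap.comp_apply, rTensor_comp_lTensor, ← lTensor_comp_rTensor,
    LinearMap.comp_apply]

namespace TensorBalance

variable {R K A B T N Q₀ Q₁ Q₂ : Type*} [CommRing R]
  [AddCommGroup K] [AddCommGroup A] [AddCommGroup B] [AddCommGroup T] [AddCommGroup N]
  [AddCommGroup Q₀] [AddCommGroup Q₁] [AddCommGroup Q₂]
  [Module R K] [Module R A] [Module R B] [Module R T] [Module R N]
  [Module R Q₀] [Module R Q₁] [Module R Q₂]
  {v : K →ₗ[R] A} {u : A →ₗ[R] B} {p : B →ₗ[R] T}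
  {d₂ : Q₂ →ₗ[R] Q₁} {d₁ : Q₁ →ₗ[R] Q₀} {π : Q₀ →ₗ[R] N}

variable (u d₁) in
def zigzags : Submodule R ((B ⊗[R] Q₁) × (A ⊗[R] Q₀)) :=
  ker (lTensor B d₁ ∘ₗ fst R _ _ - rTensor Q₀ u ∘ₗ snd R _ _)

theorem mem_zigzags {z : (B ⊗[R] Q₁) × (A ⊗[R] Q₀)} :
    z ∈ zigzags u d₁ ↔ lTensor B d₁ z.1 = rTensor Q₀ u z.2 := by
  simp [zigzags, sub_eq_zero]

theorem lTensor_rTensor_fst_eq_zero (hup : Function.Exact u p)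
    {z : (B ⊗[R] Q₁) × (A ⊗[R] Q₀)} (hz : z ∈ zigzags u d₁) :
    lTensor T d₁ (rTensor Q₁ p z.1) = 0 := by
  rw [← rTensor_lTensor_comm, mem_zigzags.mp hz, ← rTensor_comp_apply,
    hup.linearMap_comp_eq_zero, rTensor_zero, LinearMap.zero_apply]

theorem rTensor_lTensor_snd_eq_zero (h₁ : Function.Exact d₁ π)
    {z : (B ⊗[R] Q₁) × (A ⊗[R] Q₀)} (hz : z ∈ zigzags u d₁) :
    rTensor N u (lTensor A π z.2) = 0 := by
  rw [rTensor_lTensor_comm, ← mem_zigzags.mp hz, ← lTensor_comp_apply,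
    h₁.linearMap_comp_eq_zero, lTensor_zero, LinearMap.zero_apply]

def zigzags.fstCycle (hup : Function.Exact u p) : zigzags u d₁ →ₗ[R] ker (lTensor T d₁) :=
  (rTensor Q₁ p ∘ₗ fst R _ _ ∘ₗ (zigzags u d₁).subtype).codRestrict _
    fun z => lTensor_rTensor_fst_eq_zero hup z.2

def zigzags.sndCycle (h₁ : Function.Exact d₁ π) : zigzags u d₁ →ₗ[R] ker (rTensor N u) :=
  (lTensor A π ∘ₗ snd R _ _ ∘ₗ (zigzags u d₁).subtype).codRestrict _
    fun z => rTensor_lTensor_snd_eq_zero h₁ z.2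

theorem zigzags.surjective_fstCycle (hup : Function.Exact u p) (hp : Function.Surjective p) :
    Function.Surjective (zigzags.fstCycle (d₁ := d₁) hup) := by
  rintro ⟨t, ht⟩
  obtain ⟨b, rfl⟩ := rTensor_surjective Q₁ hp t
  have : rTensor Q₀ p (lTensor B d₁ b) = 0 := by rwa [rTensor_lTensor_comm]
  obtain ⟨a, ha⟩ := (rTensor_exact Q₀ hup hp _).mp this
  exact ⟨⟨(b, a), mem_zigzags.mpr ha.symm⟩, rfl⟩

theorem zigzags.surjective_sndCycle (h₁ : Function.Exact d₁ π) (hπ : Function.Surjective π) :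
    Function.Surjective (zigzags.sndCycle (u := u) h₁) := by
  rintro ⟨y, hy⟩
  obtain ⟨a, rfl⟩ := lTensor_surjective A hπ y
  have : lTensor B π (rTensor Q₀ u a) = 0 := by rwa [← rTensor_lTensor_comm]
  obtain ⟨b, hb⟩ := (lTensor_exact B h₁ hπ _).mp this
  exact ⟨⟨(b, a), mem_zigzags.mpr hb⟩, rfl⟩

theorem lTensor_snd_mem_range_of_rTensor_fst_mem_range [Module.Flat R Q₀]
    (hvu : Function.Exact v u) (hup : Function.Exact u p) (hp : Function.Surjective p)
    (h₂ : Function.Exact d₂ d₁) (h₁ : Function.Exact d₁ π)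
    {z : (B ⊗[R] Q₁) × (A ⊗[R] Q₀)} (hz : z ∈ zigzags u d₁)
    (h : rTensor Q₁ p z.1 ∈ range (lTensor T d₂)) :
    lTensor A π z.2 ∈ range (rTensor N v) := by
  obtain ⟨b, a⟩ := z
  obtain ⟨s, hs⟩ := h
  obtain ⟨b₂, rfl⟩ := rTensor_surjective Q₂ hp s
  have : rTensor Q₁ p (b - lTensor B d₂ b₂) = 0 := by
    rw [map_sub, rTensor_lTensor_comm, hs, sub_self]
  obtain ⟨a₁, ha₁⟩ := (rTensor_exact Q₁ hup hp _).mp this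
  have : rTensor Q₀ u (a - lTensor A d₁ a₁) = 0 := by
    rw [map_sub, ← mem_zigzags.mp hz, rTensor_lTensor_comm, ha₁, map_sub,
      ← lTensor_comp_apply, h₂.linearMap_comp_eq_zero, lTensor_zero, LinearMap.zero_apply,
      sub_zero, sub_self]
  obtain ⟨m, hm⟩ := (Module.Flat.rTensor_exact Q₀ hvu _).mp this
  refine ⟨lTensor K π m, ?_⟩
  rw [rTensor_lTensor_comm, hm, map_sub, ← lTensor_comp_apply, h₁.linearMap_comp_eq_zero,
    lTensor_zero, LinearMap.zero_apply, sub_zero]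

theorem rTensor_fst_mem_range_of_lTensor_snd_mem_range [Module.Flat R B]
    (hvu : Function.Exact v u) (hup : Function.Exact u p)
    (h₂ : Function.Exact d₂ d₁) (h₁ : Function.Exact d₁ π) (hπ : Function.Surjective π)
    {z : (B ⊗[R] Q₁) × (A ⊗[R] Q₀)} (hz : z ∈ zigzags u d₁)
    (h : lTensor A π z.2 ∈ range (rTensor N v)) :
    rTensor Q₁ p z.1 ∈ range (lTensor T d₂) := by
  obtain ⟨b, a⟩ := z
  obtain ⟨n, hn⟩ := h
  obtain ⟨m, rfl⟩ := lTensor_surjective K hπ n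
  have : lTensor A π (a - rTensor Q₀ v m) = 0 := by
    rw [map_sub, ← rTensor_lTensor_comm, hn, sub_self]
  obtain ⟨a₁, ha₁⟩ := (lTensor_exact A h₁ hπ _).mp this
  have : lTensor B d₁ (b - rTensor Q₁ u a₁) = 0 := by
    rw [map_sub, mem_zigzags.mp hz, ← rTensor_lTensor_comm, ha₁, map_sub,
      ← rTensor_comp_apply, hvu.linearMap_comp_eq_zero, rTensor_zero, LinearMap.zero_apply,
      sub_zero, sub_self]
  obtain ⟨b₂, hb₂⟩ := (Module.Flat.lTensor_exact B h₂ _).mp this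
  refine ⟨rTensor Q₂ p b₂, ?_⟩
  rw [← rTensor_lTensor_comm, hb₂, map_sub, ← rTensor_comp_apply, hup.linearMap_comp_eq_zero,
    rTensor_zero, LinearMap.zero_apply, sub_zero]

def homologyEquiv [Module.Flat R B] [Module.Flat R Q₀]
    (hvu : Function.Exact v u) (hup : Function.Exact u p) (hp : Function.Surjective p)
    (h₂ : Function.Exact d₂ d₁) (h₁ : Function.Exact d₁ π) (hπ : Function.Surjective π) :
    homology (lTensor T d₂) (lTensor T d₁) ≃ₗ[R] homology (rTensor N v) (rTensor N u) :=
  Submodule.quotEquivOfCommonCover (zigzags.surjective_fstCycle hup hp)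
    (zigzags.surjective_sndCycle h₁ hπ) <| by
    ext ⟨z, hz⟩
    exact ⟨lTensor_snd_mem_range_of_rTensor_fst_mem_range hvu hup hp h₂ h₁ hz,
      rTensor_fst_mem_range_of_lTensor_snd_mem_range hvu hup h₂ h₁ hπ hz⟩

end TensorBalance

universe u

namespace CategoryTheory.ProjectiveResolution

variable {R : Type u} [CommRing R] {N : ModuleCat.{u} R} (Q : ProjectiveResolution N)

instance projective_X (n : ℕ) : Module.Projective R (Q.complex.X n) :=
  (IsProjective.iff_projective _).mpr (inferInstanceAs (Projective (Q.complex.X n)))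

def augmentation : Q.complex.X 0 →ₗ[R] N :=
  (Q.π.f 0 ≫ (HomologicalComplex.singleObjXSelf (ComplexShape.down ℕ) 0 N).hom).hom

theorem surjective_augmentation : Function.Surjective Q.augmentation :=
  (ModuleCat.epi_iff_surjective _).mp inferInstance

theorem exact_augmentation : Function.Exact (Q.complex.d 1 0).hom Q.augmentation :=
  (LinearEquiv.postcomp_exact_iff_exact (e := (HomologicalComplex.singleObjXSelf
      (ComplexShape.down ℕ) 0 N).toLinearEquiv)).mpr <|
    (ShortComplex.ShortExact.moduleCat_exact_iff_function_exact _).mp <|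
      (ShortComplex.mk _ _ Q.complex_d_comp_π_f_zero).exact_of_g_is_cokernel
        Q.isColimitCokernelCofork

theorem exact_d_succ (n : ℕ) :
    Function.Exact (Q.complex.d (n + 2) (n + 1)).hom (Q.complex.d (n + 1) n).hom :=
  (ShortComplex.ShortExact.moduleCat_exact_iff_function_exact _).mp (Q.exact_succ n)

def torOneIso (T : ModuleCat.{u} R) :
    ((Tor (ModuleCat R) 1).obj T).obj N ≅
      ModuleCat.of R
        (homology (lTensor T (Q.complex.d 2 1).hom) (lTensor T (Q.complex.d 1 0).hom)) :=
  let K := (((MonoidalCategory.tensoringLeft (ModuleCat R)).obj T).mapHomologicalComplex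
    (ComplexShape.down ℕ)).obj Q.complex
  Q.isoLeftDerivedObj _ 1 ≪≫ K.homologyIsoSc' 2 1 0 (by simp) (by simp) ≪≫
    (K.sc' 2 1 0).moduleCatHomologyIso ≪≫
    (Submodule.quotEquivOfEq _ _ (range_codRestrict _ _ _)).toModuleIso

end CategoryTheory.ProjectiveResolution

theorem stmt_9_general (R : Type) [CommRing R]
    (M N : Type) [AddCommGroup M] [AddCommGroup N] [Module R M] [Module R N]
    (n0 n1 : ℕ) (f : (Fin n1 → R) →ₗ[R] (Fin n0 → R)) (g : (Fin n0 → R) →ₗ[R] M)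
    (hg : Function.Surjective g) (hfg : Function.Exact f g) :
    Nonempty (
      ((M →ₗ[R] N) ⧸ LinearMap.range (dualTensorHom R M N)) ≃ₗ[R]
      ((Tor (ModuleCat R) 1).obj
        (ModuleCat.of R
          (Module.Dual R (Fin n1 → R) ⧸ LinearMap.range f.dualMap))).obj
        (ModuleCat.of R N)) := by
  obtain ⟨Q⟩ := HasProjectiveResolution.out (Z := ModuleCat.of R N)
  have hdual : Function.Exact g.dualMap f.dualMap := exact_lcomp_of_exact_of_surjective R hfg hg
  have eHom := dualTensorHomQuotEquiv (N := N) hfg hg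
  have eBalance := TensorBalance.homologyEquiv (N := N) hdual (exact_map_mkQ_range f.dualMap)
    (Submodule.mkQ_surjective _) (Q.exact_d_succ 0) Q.exact_augmentation Q.surjective_augmentation
  have eTor := (Q.torOneIso
    (ModuleCat.of R (Module.Dual R (Fin n1 → R) ⧸ range f.dualMap))).toLinearEquiv
  exact ⟨eHom ≪≫ₗ eBalance.symm ≪≫ₗ eTor.symm⟩

/-- Lemma 2.3: let `R` be commutative Noetherian, `M, N` finitely
generated `R`-modules and `F₁ →f F₀ →g M → 0` a finite free presentation.  Let
`Tr M = coker(f* : F₀* → F₁*)` be the Auslander–Bridger transpose.  Then the cokernel of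
the natural map `λ : Hom_R(M,R) ⊗ N → Hom_R(M,N)`, `φ ⊗ y ↦ (x ↦ φ(x)y)` — that is,
`Hom_R(M,N)` modulo maps factoring through projectives — is isomorphic to
`Tor₁^R(Tr M, N)`. -/
theorem stmt_9 (R : Type) [CommRing R] [IsNoetherianRing R]
    (M N : Type) [AddCommGroup M] [AddCommGroup N] [Module R M] [Module R N]
    [Module.Finite R M] [Module.Finite R N]
    (n0 n1 : ℕ) (f : (Fin n1 → R) →ₗ[R] (Fin n0 → R)) (g : (Fin n0 → R) →ₗ[R] M)
    (hg : Function.Surjective g) (hfg : Function.Exact f g) :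
    Nonempty (
      ((M →ₗ[R] N) ⧸ LinearMap.range (dualTensorHom R M N)) ≃ₗ[R]
      ((Tor (ModuleCat R) 1).obj
        (ModuleCat.of R
          (Module.Dual R (Fin n1 → R) ⧸ LinearMap.range f.dualMap))).obj
        (ModuleCat.of R N)) :=
  stmt_9_general R M N n0 n1 f g hg hfg
end
end

section
/- Let T and T′ be triangulated categories, F : T → T′ a triangulated (exact) functor, and U an object of T. If for every n ∈ ℤ the map F : Hom_T(U, U[n]) → Hom_{T′}(FU, FU[n]) is bijective, then F is fully faithful on thick(U): for all objects X, Y of the smallest full triangulated subcategory of T containing U and closed under isomorphisms and direct summands, the map F : Hom_T(X, Y) → Hom_{T′}(FX, FY) is bijective. -/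
/-!
For a fixed object `X`, the objects `Y` such that `F` is bijective on `Hom(X, Y⟦n⟧)` for all `n`
form a thick class: closure under retracts is formal, and closure under cones is the five lemma
for the long exact `Hom(X, -)` sequences of a distinguished triangle and of its image under `F`.
Taking `X = U` shows that `F` is bijective on `Hom(U, Y⟦n⟧)`, hence on `Hom(U⟦n⟧, Y)`, for every
`Y ∈ thick(U)`; the same argument in the first variable, with the sequences `Hom(-, Y)`, then
covers `Hom(X, Y)` for every `X ∈ thick(U)`.
-/

open CategoryTheory CategoryTheory.Limits CategoryTheory.Pretriangulated

universe v v' u u'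

variable (C : Type u) [Category.{v} C] [HasShift C ℤ] [Preadditive C] [HasZeroObject C]
  [∀ n : ℤ, (shiftFunctor C n).Additive] [Pretriangulated C]

/-- A class of objects `Q` of a (pre)triangulated category is *thick* if it is closed
under isomorphisms, shifts (in both directions), cones of morphisms between its objects
(two-out-of-three in distinguished triangles), and direct summands. -/
def IsThickClass [HasBinaryBiproducts C] (Q : Set C) : Prop :=
  (∀ ⦃X Y : C⦄, (X ≅ Y) → X ∈ Q → Y ∈ Q) ∧
  (∀ (X : C) (n : ℤ), X ∈ Q → X⟦n⟧ ∈ Q) ∧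
  (∀ T ∈ distTriang C, T.obj₁ ∈ Q → T.obj₂ ∈ Q → T.obj₃ ∈ Q) ∧
  (∀ X Y Z : C, Z ∈ Q → (Z ≅ X ⊞ Y) → X ∈ Q)

/-- `thick(U)`: the smallest thick class of objects containing `U`, i.e. the smallest
full triangulated subcategory containing `U` and closed under isomorphisms and direct
summands. -/
def thickClosure [HasBinaryBiproducts C] (U : C) : Set C :=
  {X | ∀ Q : Set C, IsThickClass C Q → U ∈ Q → X ∈ Q}

section ThickClass

variable {C : Type u} [Category.{v} C] [HasShift C ℤ] [Preadditive C] [HasZeroObject C]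
  [∀ n : ℤ, (shiftFunctor C n).Additive] [Pretriangulated C] [HasBinaryBiproducts C]

theorem isThickClass_setOf_forall_shift {P : C → Prop}
    (retract : ∀ ⦃X Y : C⦄, Retract X Y → P Y → P X)
    (triangle : ∀ T ∈ distTriang C, P T.obj₁ → P T.obj₂ →
      P (T.obj₁⟦(1 : ℤ)⟧) → P (T.obj₂⟦(1 : ℤ)⟧) → P T.obj₃) :
    IsThickClass C {X | ∀ n : ℤ, P (X⟦n⟧)} := by
  have shift_shift (X : C) (m n : ℤ) (h : P (X⟦m + n⟧)) : P (X⟦m⟧⟦n⟧) :=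
    retract ((shiftFunctorAdd C m n).app X).symm.retract h
  refine ⟨fun X Y e hX n => retract ((shiftFunctor C n).mapIso e).symm.retract (hX n),
    fun X m hX n => shift_shift X m n (hX (m + n)),
    fun T hT h₁ h₂ n => triangle _ (Triangle.shift_distinguished T hT n) (h₁ n) (h₂ n)
      (shift_shift _ n 1 (h₁ (n + 1))) (shift_shift _ n 1 (h₂ (n + 1))),
    fun X Y Z hZ e n => retract ?_ (hZ n)⟩
  exact ((BinaryBiproduct.bicone X Y).retract_left.trans e.symm.retract).map (shiftFunctor C n)

end ThickClass

namespace CategoryTheory.Functor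

variable {C : Type u} [Category.{v} C] {D : Type u'} [Category.{v'} D]

def BijectiveOnHom (F : C ⥤ D) (X Y : C) : Prop :=
  Function.Bijective (F.map : (X ⟶ Y) → (F.obj X ⟶ F.obj Y))

theorem BijectiveOnHom.of_retract {F : C ⥤ D} {X X' Y Y' : C} (hX : Retract X X')
    (hY : Retract Y Y') (h : F.BijectiveOnHom X' Y') : F.BijectiveOnHom X Y := by
  refine ⟨fun φ φ' hφ => ?_, fun g => ?_⟩
  · have : hX.r ≫ φ ≫ hY.i = hX.r ≫ φ' ≫ hY.i := h.1 (by simp [hφ])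
    simpa using congrArg (fun ψ => hX.i ≫ ψ ≫ hY.r) this
  · obtain ⟨ψ, hψ⟩ := h.2 (F.map hX.r ≫ g ≫ F.map hY.i)
    refine ⟨hX.i ≫ ψ ≫ hY.r, ?_⟩
    simp only [map_comp, hψ, Category.assoc]
    rw [← F.map_comp_assoc, hX.retract, ← F.map_comp, hY.retract]
    simp

theorem BijectiveOnHom.shift {A : Type*} [AddGroup A] [HasShift C A] [HasShift D A]
    {F : C ⥤ D} [F.CommShift A] {X Y : C} (h : F.BijectiveOnHom X Y) (a : A) :
    F.BijectiveOnHom (X⟦a⟧) (Y⟦a⟧) := by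
  have hcomm : F.map ∘ (shiftFunctor C a).map =
      (((F.commShiftIso a).app X).homCongr ((F.commShiftIso a).app Y)).symm ∘
        (shiftFunctor D a).map ∘ F.map := by
    ext φ
    simp [Iso.homCongr_symm]
  unfold BijectiveOnHom
  rw [← Function.Bijective.of_comp_iff _
    ((FullyFaithful.ofFullyFaithful _).map_bijective X Y), hcomm]
  exact (Equiv.bijective _).comp (((FullyFaithful.ofFullyFaithful _).map_bijective _ _).comp h)

section FourLemma

variable [HasShift C ℤ] [Preadditive C] [HasZeroObject C]
  [∀ n : ℤ, (shiftFunctor C n).Additive] [Pretriangulated C]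
  [HasShift D ℤ] [Preadditive D] [HasZeroObject D]
  [∀ n : ℤ, (shiftFunctor D n).Additive] [Pretriangulated D]
  (F : C ⥤ D) [F.CommShift ℤ] [F.IsTriangulated] (T : Triangle C) (hT : T ∈ distTriang C)
include hT

theorem mk_map_distinguished :
    Triangle.mk (F.map T.mor₁) (F.map T.mor₂)
      (F.map T.mor₃ ≫ (F.commShiftIso (1 : ℤ)).hom.app T.obj₁) ∈ distTriang D :=
  F.map_distinguished T hT

theorem map_injective_into_obj₃ (X : C)
    (h₁ : Function.Surjective (F.map : (X ⟶ T.obj₁) → _))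
    (h₂ : Function.Injective (F.map : (X ⟶ T.obj₂) → _))
    (h₁' : Function.Injective (F.map : (X ⟶ T.obj₁⟦(1 : ℤ)⟧) → _)) :
    Function.Injective (F.map : (X ⟶ T.obj₃) → _) := by
  refine (injective_iff_map_eq_zero F.mapAddHom).2 fun φ (hφ : F.map φ = 0) => ?_
  obtain ⟨ψ, rfl⟩ := Triangle.coyoneda_exact₃ T hT φ (h₁' (by simp [hφ]))
  obtain ⟨f, hf⟩ : ∃ f, F.map ψ = f ≫ F.map T.mor₁ :=
    Triangle.coyoneda_exact₂ _ (mk_map_distinguished F T hT) (F.map ψ)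
      ((F.map_comp _ _).symm.trans hφ)
  obtain ⟨ρ, rfl⟩ := h₁ f
  obtain rfl : ψ = ρ ≫ T.mor₁ := h₂ (by simpa using hf)
  simp [comp_distTriang_mor_zero₁₂ T hT]

theorem map_surjective_into_obj₃ (X : C)
    (h₂ : Function.Surjective (F.map : (X ⟶ T.obj₂) → _))
    (h₁' : Function.Surjective (F.map : (X ⟶ T.obj₁⟦(1 : ℤ)⟧) → _))
    (h₂' : Function.Injective (F.map : (X ⟶ T.obj₂⟦(1 : ℤ)⟧) → _)) :
    Function.Surjective (F.map : (X ⟶ T.obj₃) → _) := by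
  intro g
  obtain ⟨α, hα⟩ := h₁' (g ≫ F.map T.mor₃)
  obtain ⟨β, rfl⟩ := Triangle.coyoneda_exact₁ T hT α
    (h₂' (by simp [hα, ← F.map_comp, comp_distTriang_mor_zero₃₁ T hT]))
  have hg : (g - F.map β) ≫ F.map T.mor₃ ≫ (F.commShiftIso (1 : ℤ)).hom.app T.obj₁ = 0 := by
    rw [← Category.assoc, Preadditive.sub_comp, ← hα, F.map_comp, sub_self, zero_comp]
  obtain ⟨f, hf⟩ : ∃ f, g - F.map β = f ≫ F.map T.mor₂ :=
    Triangle.coyoneda_exact₃ _ (mk_map_distinguished F T hT) _ hg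
  obtain ⟨γ, rfl⟩ := h₂ f
  exact ⟨β + γ ≫ T.mor₂, by simp [← hf]⟩

theorem map_injective_from_obj₃ (Y : C)
    (h₂ : Function.Injective (F.map : (T.obj₂ ⟶ Y) → _))
    (h₁' : Function.Injective (F.map : (T.obj₁⟦(1 : ℤ)⟧ ⟶ Y) → _))
    (h₂' : Function.Surjective (F.map : (T.obj₂⟦(1 : ℤ)⟧ ⟶ Y) → _)) :
    Function.Injective (F.map : (T.obj₃ ⟶ Y) → _) := by
  refine (injective_iff_map_eq_zero F.mapAddHom).2 fun φ (hφ : F.map φ = 0) => ?_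
  obtain ⟨ψ, rfl⟩ := Triangle.yoneda_exact₃ T hT φ (h₂ (by simp [hφ]))
  obtain ⟨f, hf⟩ : ∃ f, F.map ψ =
      (F.map (-T.mor₁⟦(1 : ℤ)⟧') ≫ (F.commShiftIso (1 : ℤ)).hom.app T.obj₂) ≫ f :=
    Triangle.yoneda_exact₃ _ (mk_map_distinguished F _ (rot_of_distTriang T hT)) _
      ((F.map_comp _ _).symm.trans hφ)
  obtain ⟨δ, hδ⟩ := h₂' ((F.commShiftIso (1 : ℤ)).hom.app T.obj₂ ≫ f)
  obtain rfl : ψ = (-T.mor₁⟦(1 : ℤ)⟧') ≫ δ := h₁' (by rw [hf, F.map_comp, hδ, Category.assoc])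
  simp [comp_distTriang_mor_zero₃₁_assoc T hT]

theorem map_surjective_from_obj₃ (Y : C)
    (h₁ : Function.Injective (F.map : (T.obj₁ ⟶ Y) → _))
    (h₂ : Function.Surjective (F.map : (T.obj₂ ⟶ Y) → _))
    (h₁' : Function.Surjective (F.map : (T.obj₁⟦(1 : ℤ)⟧ ⟶ Y) → _)) :
    Function.Surjective (F.map : (T.obj₃ ⟶ Y) → _) := by
  intro g
  obtain ⟨β, hβ⟩ := h₂ (F.map T.mor₂ ≫ g)
  obtain ⟨γ, rfl⟩ := Triangle.yoneda_exact₂ T hT β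
    (h₁ (by simp [hβ, ← F.map_comp_assoc, comp_distTriang_mor_zero₁₂ T hT]))
  have hg : F.map T.mor₂ ≫ (g - F.map γ) = 0 := by
    rw [Preadditive.comp_sub, ← F.map_comp, hβ, sub_self]
  obtain ⟨f, hf⟩ : ∃ f, g - F.map γ =
      (F.map T.mor₃ ≫ (F.commShiftIso (1 : ℤ)).hom.app T.obj₁) ≫ f :=
    Triangle.yoneda_exact₃ _ (mk_map_distinguished F T hT) _ hg
  obtain ⟨ε, hε⟩ := h₁' ((F.commShiftIso (1 : ℤ)).hom.app T.obj₁ ≫ f)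
  refine ⟨γ + T.mor₃ ≫ ε, ?_⟩
  rw [F.map_add, F.map_comp, hε, ← Category.assoc, ← hf, add_sub_cancel]

end FourLemma

section Devissage

variable [HasShift C ℤ] [Preadditive C] [HasZeroObject C]
  [∀ n : ℤ, (shiftFunctor C n).Additive] [Pretriangulated C] [HasBinaryBiproducts C]
  [HasShift D ℤ] [Preadditive D] [HasZeroObject D]
  [∀ n : ℤ, (shiftFunctor D n).Additive] [Pretriangulated D]
  (F : C ⥤ D) [F.CommShift ℤ] [F.IsTriangulated]

theorem isThickClass_setOf_bijectiveOnHom_shift_right (X : C) :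
    IsThickClass C {Y | ∀ n : ℤ, F.BijectiveOnHom X (Y⟦n⟧)} :=
  isThickClass_setOf_forall_shift (fun _ _ h => BijectiveOnHom.of_retract (Retract.refl X) h)
    fun T hT h₁ h₂ h₁' h₂' => ⟨F.map_injective_into_obj₃ T hT X h₁.2 h₂.1 h₁'.1,
      F.map_surjective_into_obj₃ T hT X h₂.2 h₁'.2 h₂'.1⟩

theorem isThickClass_setOf_bijectiveOnHom_shift_left (Y : C) :
    IsThickClass C {X | ∀ n : ℤ, F.BijectiveOnHom (X⟦n⟧) Y} :=
  isThickClass_setOf_forall_shift (fun _ _ h => BijectiveOnHom.of_retract h (Retract.refl Y))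
    fun T hT h₁ h₂ h₁' h₂' => ⟨F.map_injective_from_obj₃ T hT Y h₂.1 h₁'.1 h₂'.2,
      F.map_surjective_from_obj₃ T hT Y h₁.1 h₂.2 h₁'.2⟩

end Devissage

end CategoryTheory.Functor

/-- **Statement 19** (Lemma 8.3, dévissage): let `F : T → T'` be a triangulated functor
and `U` an object of `T` such that `F : Hom(U, U[n]) → Hom(FU, FU[n])` is bijective for
all `n ∈ ℤ`.  Then `F` is fully faithful on `thick(U)`. -/
theorem stmt_19 {C : Type u} [Category.{v} C] [HasShift C ℤ] [Preadditive C]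
    [HasZeroObject C] [∀ n : ℤ, (shiftFunctor C n).Additive] [Pretriangulated C]
    [HasBinaryBiproducts C]
    {D : Type u'} [Category.{v'} D] [HasShift D ℤ] [Preadditive D]
    [HasZeroObject D] [∀ n : ℤ, (shiftFunctor D n).Additive] [Pretriangulated D]
    (F : C ⥤ D) [F.CommShift ℤ] [F.IsTriangulated]
    (U : C)
    (hU : ∀ n : ℤ, Function.Bijective
      (fun φ : U ⟶ U⟦n⟧ => F.map φ ≫ (F.commShiftIso n).hom.app U)) :
    ∀ X ∈ thickClosure C U, ∀ Y ∈ thickClosure C U,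
      Function.Bijective (fun φ : X ⟶ Y => F.map φ) := by
  intro X hX Y hY
  have hUU (n : ℤ) : F.BijectiveOnHom U (U⟦n⟧) :=
    (((F.commShiftIso n).app U).homToEquiv.bijective.of_comp_iff' F.map).1 (hU n)
  have hUY : ∀ n : ℤ, F.BijectiveOnHom U (Y⟦n⟧) :=
    hY _ (Functor.isThickClass_setOf_bijectiveOnHom_shift_right F U) hUU
  have hUY' (n : ℤ) : F.BijectiveOnHom (U⟦n⟧) Y :=
    ((hUY (-n)).shift n).of_retract (Retract.refl _) (shiftNegShift Y n).symm.retract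
  exact (hX _ (Functor.isThickClass_setOf_bijectiveOnHom_shift_left F Y) hUY' 0).of_retract
    ((shiftFunctorZero C ℤ).app X).symm.retract (Retract.refl Y)
end
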